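/- Let ψ_l be the F_q-algebra endomorphism of F_q[x_1,...,x_{2m}] with ψ_l(x_i) = F_{l,q}(x_i) (the additive polynomial whose roots are the span of x_1,...,x_l evaluated at x_i). Writing T = ψ_{l-1}(x_l), for l ≥ 1 one has ψ_l(Ω_{0,1}) = ψ_{l-1}(Ω_{0,1})^q - T^{q-1} ψ_{l-1}(Ω_{1,1}) + T^{2(q-1)} ψ_{l-1}(Ω_{0,1}). -/

import Mathlib

/-!
Write `F_l(y) = ∏_{c ∈ F^l} (y - ∑ c_j x_j)`, so that `ψ_l(x_i) = F_l(x_i)`. Splitting off the last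
coordinate gives `F_{l+1}(y) = ∏_{a ∈ F} F_l(y - a x_{l+1})`. By induction `F_l` is `F`-linear
(the step is a composite of `F_l` with the Frobenius `z ↦ z^q` and a scalar multiple), so with
`T = F_l(x_{l+1})` the product is `∏_a (F_l(y) - a T) = F_l(y)^q - T^{q-1} F_l(y)`: the
homogenization of `∏_a (X - a) = X^q - X`. Hence `ψ_{l+1} = ψ_l ∘ (x_i ↦ x_i^q - x_{l+1}^{q-1} x_i)`,
and the theorem is the image under `ψ_l` of the identity obtained by substituting into `Ω_{0,1}`
and expanding `(x_{2m-i+1}^q - t^{q-1} x_{2m-i+1})(x_i^q - t^{q-1} x_i)`, using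
`Ω_{0,1}^q = ∑ x_{2m-i+1}^q x_i^q`.
-/

open MvPolynomial Finset

/-- The `i`-th Steenrod operation `P^i` on `F[x_1,…,x_n]`: the coefficient of `ζ^i` in the image
of `f` under the `F`-algebra map sending each variable `x_k` to `x_k + x_k^q ζ`. -/
noncomputable def steenrod (F : Type*) [Field F] [Fintype F] (n i : ℕ)
    (f : MvPolynomial (Fin n) F) : MvPolynomial (Fin n) F :=
  ((MvPolynomial.aeval fun k : Fin n =>
      (Polynomial.C (MvPolynomial.X k) +
        Polynomial.X * Polynomial.C (MvPolynomial.X k ^ Fintype.card F) :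
        Polynomial (MvPolynomial (Fin n) F))) f).coeff i

/-- `Ω_{0,1} = Σ_{i=1}^m x_{2m-i+1} x_i`. -/
noncomputable def Omega0 (F : Type*) [Field F] [Fintype F] (m : ℕ) :
    MvPolynomial (Fin (2 * m)) F :=
  ∑ i : Fin m,
    MvPolynomial.X (⟨2 * m - 1 - i, by have := i.isLt; omega⟩ : Fin (2 * m)) *
      MvPolynomial.X (⟨i, by have := i.isLt; omega⟩ : Fin (2 * m))

/-- `Ω_{s,j} = Σ_{i=1}^m (x_{2m-i+1}^{q^s} x_i + j · x_{2m-i+1} x_i^{q^s})` for `s ≥ 1`. -/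
noncomputable def Omega (F : Type*) [Field F] [Fintype F] (m s : ℕ) (j : F) :
    MvPolynomial (Fin (2 * m)) F :=
  ∑ i : Fin m,
    (MvPolynomial.X (⟨2 * m - 1 - i, by have := i.isLt; omega⟩ : Fin (2 * m)) ^
        (Fintype.card F ^ s) *
      MvPolynomial.X (⟨i, by have := i.isLt; omega⟩ : Fin (2 * m)) +
     j • (MvPolynomial.X (⟨2 * m - 1 - i, by have := i.isLt; omega⟩ : Fin (2 * m)) *
      MvPolynomial.X (⟨i, by have := i.isLt; omega⟩ : Fin (2 * m)) ^ (Fintype.card F ^ s)))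

/-- The `F`-algebra endomorphism `ψ_l` of `F[x_1,…,x_n]` sending each variable `x_i` to
`F_{l,q}(x_i) = ∏_{u ∈ span(x_1,…,x_l)} (x_i - u)`. -/
noncomputable def psi (F : Type*) [Field F] [Fintype F] (n l : ℕ) (h : l ≤ n) :
    MvPolynomial (Fin n) F →ₐ[F] MvPolynomial (Fin n) F :=
  MvPolynomial.aeval fun i =>
    ∏ c : Fin l → F, (MvPolynomial.X i - ∑ j, c j • MvPolynomial.X (Fin.castLE h j))


namespace FiniteField

variable {F : Type*} [Field F] [Fintype F]

theorem prod_X_sub_C_eq_X_pow_card_sub_X :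
    ∏ a : F, (Polynomial.X - Polynomial.C a) = Polynomial.X ^ Fintype.card F - Polynomial.X := by
  have hmonic : (Polynomial.X ^ Fintype.card F - Polynomial.X : Polynomial F).Monic :=
    (Polynomial.monic_X_pow _).sub_of_left <| by
      rw [Polynomial.degree_X, Polynomial.degree_X_pow]; exact_mod_cast Fintype.one_lt_card
  have hroots := roots_X_pow_card_sub_X F
  rw [← Polynomial.prod_multiset_X_sub_C_of_monic_of_roots_card_eq hmonic, hroots]
  · rfl
  · rw [hroots, X_pow_card_sub_X_natDegree_eq F Fintype.one_lt_card]; rfl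

open Polynomial in
theorem prod_sub_smul {A : Type*} [CommRing A] [Algebra F A] (y t : A) :
    ∏ a : F, (y - a • t) = y ^ Fintype.card F - t ^ (Fintype.card F - 1) * y := by
  have h : (∏ a : F, (Polynomial.X - Polynomial.C a)).homogenize (∑ _a : F, 1)
      = (Polynomial.X ^ Fintype.card F - Polynomial.X : F[X]).homogenize (Fintype.card F) := by
    rw [prod_X_sub_C_eq_X_pow_card_sub_X, Finset.sum_const, Finset.card_univ, smul_eq_mul, mul_one]
  have hdeg : ∀ a : F, (Polynomial.X - Polynomial.C a).natDegree ≤ 1 :=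
    fun a => (natDegree_X_sub_C a).le
  rw [homogenize_finsetProd fun a _ => hdeg a] at h
  simp only [homogenize_sub, homogenize_X_pow le_rfl, homogenize_X Fintype.card_ne_zero,
    homogenize_X one_ne_zero, homogenize_C, Nat.sub_self, pow_zero, pow_one, mul_one] at h
  simpa [map_prod, Algebra.smul_def, mul_comm] using congrArg (MvPolynomial.aeval ![y, t]) h

end FiniteField

section SubspacePoly

variable (F : Type*) [Field F] [Fintype F] {A : Type*} [CommRing A] [Algebra F A]

/-- `∏_{c ∈ F^l} (y - ∑ c_j v_j)`; for linearly independent `v` this is the paper's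
`F_{l,q}(y) = ∏_{u ∈ span_F v} (y - u)`. -/
noncomputable def subspacePoly {l : ℕ} (v : Fin l → A) (y : A) : A :=
  ∏ c : Fin l → F, (y - ∑ j, c j • v j)

variable {F}

@[simp]
theorem subspacePoly_zero (v : Fin 0 → A) (y : A) : subspacePoly F v y = y := by
  simp [subspacePoly]

theorem subspacePoly_succ {l : ℕ} (v : Fin (l + 1) → A) (y : A) :
    subspacePoly F v y = ∏ a : F, subspacePoly F (Fin.init v) (y - a • v (Fin.last l)) := by
  rw [subspacePoly, ← (Fin.snocEquiv fun _ => F).prod_comp, Fintype.prod_prod_type]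
  refine Finset.prod_congr rfl fun a _ => Finset.prod_congr rfl fun c _ => ?_
  simp only [Fin.snocEquiv_apply, Fin.sum_univ_castSucc, Fin.snoc_castSucc, Fin.snoc_last,
    Fin.init]
  ring

theorem subspacePoly_succ_of_isLinearMap {l : ℕ} (v : Fin (l + 1) → A)
    (hlin : IsLinearMap F (subspacePoly F (Fin.init v))) (y : A) :
    subspacePoly F v y = subspacePoly F (Fin.init v) y ^ Fintype.card F
      - subspacePoly F (Fin.init v) (v (Fin.last l)) ^ (Fintype.card F - 1)
        * subspacePoly F (Fin.init v) y := by
  simp only [subspacePoly_succ, hlin.map_sub, hlin.map_smul]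
  exact FiniteField.prod_sub_smul _ _

theorem isLinearMap_subspacePoly {l : ℕ} (v : Fin l → A) : IsLinearMap F (subspacePoly F v) := by
  induction l with
  | zero => exact ⟨fun x y => by simp, fun c x => by simp⟩
  | succ l ih =>
    have hrec := subspacePoly_succ_of_isLinearMap v (ih _)
    have hfrob : ∀ x y : A, (x + y) ^ Fintype.card F = x ^ Fintype.card F + y ^ Fintype.card F :=
      map_add (FiniteField.frobeniusAlgHom F A)
    constructor
    · intro x y
      simp only [hrec, (ih _).map_add, hfrob]
      ring
    · intro c x
      simp only [hrec, (ih _).map_smul, smul_pow, FiniteField.pow_card, smul_sub, mul_smul_comm]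

theorem subspacePoly_succ_eq {l : ℕ} (v : Fin (l + 1) → A) (y : A) :
    subspacePoly F v y = subspacePoly F (Fin.init v) y ^ Fintype.card F
      - subspacePoly F (Fin.init v) (v (Fin.last l)) ^ (Fintype.card F - 1)
        * subspacePoly F (Fin.init v) y :=
  subspacePoly_succ_of_isLinearMap v (isLinearMap_subspacePoly _) y

end SubspacePoly

section Psi

variable (F : Type*) [Field F] [Fintype F]

noncomputable def psiStep (n : ℕ) (t : MvPolynomial (Fin n) F) :
    MvPolynomial (Fin n) F →ₐ[F] MvPolynomial (Fin n) F :=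
  aeval fun i => X i ^ Fintype.card F - t ^ (Fintype.card F - 1) * X i

variable {F}

theorem psi_X (n l : ℕ) (h : l ≤ n) (i : Fin n) :
    psi F n l h (X i) = subspacePoly F (fun j : Fin l => X (Fin.castLE h j)) (X i) :=
  aeval_X _ _

theorem psi_succ (n l : ℕ) (h : l + 1 ≤ n) :
    psi F n (l + 1) h = (psi F n l (by omega)).comp (psiStep F n (X ⟨l, h⟩)) := by
  refine MvPolynomial.algHom_ext fun i => ?_
  simp only [AlgHom.comp_apply, psiStep, aeval_X, map_sub, map_mul, map_pow, psi_X]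
  exact subspacePoly_succ_eq _ _

theorem psiStep_Omega0 (m : ℕ) (t : MvPolynomial (Fin (2 * m)) F) :
    psiStep F (2 * m) t (Omega0 F m)
      = Omega0 F m ^ Fintype.card F - t ^ (Fintype.card F - 1) * Omega F m 1 1
        + t ^ (2 * (Fintype.card F - 1)) * Omega0 F m := by
  have hfrob : ∀ f : Fin m → MvPolynomial (Fin (2 * m)) F,
      (∑ i, f i) ^ Fintype.card F = ∑ i, f i ^ Fintype.card F :=
    fun f => map_sum (FiniteField.frobeniusAlgHom F _) f Finset.univ
  simp only [psiStep, Omega0, Omega, map_sum, map_mul, aeval_X, hfrob, pow_one, one_smul,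
    Finset.mul_sum, ← Finset.sum_sub_distrib, ← Finset.sum_add_distrib]
  refine Finset.sum_congr rfl fun i _ => ?_
  ring

end Psi

theorem stmt_16 (F : Type*) [Field F] [Fintype F] (m l q : ℕ) (hq : q = Fintype.card F)
    (h : l + 1 ≤ 2 * m) :
    psi F (2 * m) (l + 1) h (Omega0 F m)
      = (psi F (2 * m) l (by omega) (Omega0 F m)) ^ q
        - (psi F (2 * m) l (by omega) (X ⟨l, by omega⟩)) ^ (q - 1)
          * psi F (2 * m) l (by omega) (Omega F m 1 1)
        + (psi F (2 * m) l (by omega) (X ⟨l, by omega⟩)) ^ (2 * (q - 1))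
          * psi F (2 * m) l (by omega) (Omega0 F m) := by
  subst hq
  rw [psi_succ, AlgHom.comp_apply, psiStep_Omega0]
  simp only [map_add, map_sub, map_mul, map_pow]
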